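/- Let H⁺ be a Garside submonoid of a Garside monoid G⁺ with Garside element Δ, and let δ be the common upper bound of H⁺ ∩ D(Δ). Then δ is balanced in H⁺: the set of left-divisors of δ lying in H⁺ equals the set of right-divisors of δ lying in H⁺, and both equal D(Δ) ∩ H⁺. -/

import Mathlib

/-!
The least upper bound δ of H⁺ ∩ D(Δ) divides Δ, because Δ is itself an upper bound; so every
divisor of δ lies in D(Δ), while every element of H⁺ ∩ D(Δ) divides δ. Since Δ is
balanced, D(Δ) is also the set of right divisors of Δ and the same argument works on the right.
-/

namespace Garside

variable {M : Type*}

/-- left-divisibility -/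
def LDvd [Monoid M] (a b : M) : Prop := ∃ c, b = a * c

/-- right-divisibility -/
def RDvd [Monoid M] (a b : M) : Prop := ∃ c, b = c * a

/-- Noetherian: lengths of factorizations into non-identity factors are bounded. -/
def NoetherianM (M : Type*) [Monoid M] : Prop :=
  ∀ g : M, ∃ N : ℕ, ∀ l : List M, l.prod = g → (∀ x ∈ l, x ≠ 1) → l.length ≤ N

/-- balanced element: left divisors = right divisors -/
def Balanced [Monoid M] (δ : M) : Prop := ∀ g : M, LDvd g δ ↔ RDvd g δ

/-- the set of (left-)divisors of a (balanced) element -/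
def D [Monoid M] (δ : M) : Set M := {g | LDvd g δ}

/-- atom of a monoid -/
def IsAtomM [Monoid M] (h : M) : Prop := h ≠ 1 ∧ ∀ g k : M, h = g * k → g = 1 ∨ k = 1

/-- support of a balanced element: atoms dividing it -/
def suppM [Monoid M] (δ : M) : Set M := {s | IsAtomM s ∧ LDvd s δ}

/-- A Garside monoid structure on a cancellative monoid. -/
structure GarsideMonoid (M : Type*) [CancelMonoid M] where
  noeth : NoetherianM M
  wedgeL : M → M → M
  wedgeL_dvd_left : ∀ a b, LDvd (wedgeL a b) a
  wedgeL_dvd_right : ∀ a b, LDvd (wedgeL a b) b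
  le_wedgeL : ∀ a b c, LDvd c a → LDvd c b → LDvd c (wedgeL a b)
  veeL : M → M → M
  dvd_veeL_left : ∀ a b, LDvd a (veeL a b)
  dvd_veeL_right : ∀ a b, LDvd b (veeL a b)
  veeL_le : ∀ a b c, LDvd a c → LDvd b c → LDvd (veeL a b) c
  wedgeR : M → M → M
  wedgeR_dvd_left : ∀ a b, RDvd (wedgeR a b) a
  wedgeR_dvd_right : ∀ a b, RDvd (wedgeR a b) b
  le_wedgeR : ∀ a b c, RDvd c a → RDvd c b → RDvd c (wedgeR a b)
  veeR : M → M → M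
  dvd_veeR_left : ∀ a b, RDvd a (veeR a b)
  dvd_veeR_right : ∀ a b, RDvd b (veeR a b)
  veeR_le : ∀ a b c, RDvd a c → RDvd b c → RDvd (veeR a b) c
  Δ : M
  balanced : Balanced Δ
  finD : (D Δ).Finite
  gen : Submonoid.closure (D Δ) = ⊤

variable [CancelMonoid M]

/-- head function (left) -/
def GarsideMonoid.αL (G : GarsideMonoid M) (w : M) : M := G.wedgeL w G.Δ

/-- head function (right) -/
def GarsideMonoid.αR (G : GarsideMonoid M) (w : M) : M := G.wedgeR w G.Δ

/-- Garside submonoid: a sublattice submonoid closed under the head maps. -/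
def IsGarsideSubmonoid (G : GarsideMonoid M) (H : Submonoid M) : Prop :=
  (∀ a ∈ H, ∀ b ∈ H,
      G.wedgeL a b ∈ H ∧ G.veeL a b ∈ H ∧ G.wedgeR a b ∈ H ∧ G.veeR a b ∈ H) ∧
  (∀ h ∈ H, G.αL h ∈ H ∧ G.αR h ∈ H)

/-- least upper bound of a set for left-divisibility -/
def IsLubL (S : Set M) (δ : M) : Prop :=
  (∀ x ∈ S, LDvd x δ) ∧ ∀ c, (∀ x ∈ S, LDvd x c) → LDvd δ c

/-- least upper bound of a set for right-divisibility -/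
def IsLubR (S : Set M) (δ : M) : Prop :=
  (∀ x ∈ S, RDvd x δ) ∧ ∀ c, (∀ x ∈ S, RDvd x c) → RDvd δ c

section Monoid

variable {α : Type*} [Monoid α]

theorem LDvd.trans {a b c : α} : LDvd a b → LDvd b c → LDvd a c := by
  rintro ⟨x, rfl⟩ ⟨y, rfl⟩
  exact ⟨x * y, mul_assoc a x y⟩

theorem RDvd.trans {a b c : α} : RDvd a b → RDvd b c → RDvd a c := by
  rintro ⟨x, rfl⟩ ⟨y, rfl⟩
  exact ⟨y * x, (mul_assoc y x a).symm⟩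

theorem Balanced.D_eq_setOf_rdvd {Δ : α} (h : Balanced Δ) : D Δ = {g | RDvd g Δ} :=
  Set.ext h

end Monoid

theorem IsLubL.sep_ldvd_eq {A : Set M} {a δ : M} (h : IsLubL (A ∩ {g | LDvd g a}) δ) :
    {g | g ∈ A ∧ LDvd g δ} = A ∩ {g | LDvd g a} := by
  have hδa : LDvd δ a := h.2 a fun _ hx => hx.2
  exact Set.ext fun g => ⟨fun ⟨hgA, hgδ⟩ => ⟨hgA, hgδ.trans hδa⟩, fun hg => ⟨hg.1, h.1 g hg⟩⟩

theorem IsLubR.sep_rdvd_eq {A : Set M} {a δ : M} (h : IsLubR (A ∩ {g | RDvd g a}) δ) :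
    {g | g ∈ A ∧ RDvd g δ} = A ∩ {g | RDvd g a} := by
  have hδa : RDvd δ a := h.2 a fun _ hx => hx.2
  exact Set.ext fun g => ⟨fun ⟨hgA, hgδ⟩ => ⟨hgA, hgδ.trans hδa⟩, fun hg => ⟨hg.1, h.1 g hg⟩⟩

theorem garside_submonoid_element_balanced_general {M : Type*} [CancelMonoid M]
    (G : GarsideMonoid M) (H : Submonoid M)
    (δ : M) (hL : IsLubL ((H : Set M) ∩ D G.Δ) δ) (hR : IsLubR ((H : Set M) ∩ D G.Δ) δ) :
    {g | g ∈ H ∧ LDvd g δ} = {g | g ∈ H ∧ RDvd g δ} ∧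
    {g | g ∈ H ∧ LDvd g δ} = D G.Δ ∩ (H : Set M) := by
  have hLeft : {g | g ∈ H ∧ LDvd g δ} = (H : Set M) ∩ D G.Δ := hL.sep_ldvd_eq
  have hRight : {g | g ∈ H ∧ RDvd g δ} = (H : Set M) ∩ D G.Δ := by
    rw [G.balanced.D_eq_setOf_rdvd] at hR ⊢
    exact hR.sep_rdvd_eq
  exact ⟨hLeft.trans hRight.symm, hLeft.trans (Set.inter_comm _ _)⟩

theorem garside_submonoid_element_balanced {M : Type*} [CancelMonoid M]
    (G : GarsideMonoid M) (H : Submonoid M) (hH : IsGarsideSubmonoid G H)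
    (δ : M) (hL : IsLubL ((H : Set M) ∩ D G.Δ) δ) (hR : IsLubR ((H : Set M) ∩ D G.Δ) δ) :
    {g | g ∈ H ∧ LDvd g δ} = {g | g ∈ H ∧ RDvd g δ} ∧
    {g | g ∈ H ∧ LDvd g δ} = D G.Δ ∩ (H : Set M) :=
  garside_submonoid_element_balanced_general G H δ hL hR
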